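/- S_n / n converges in distribution, as n → ∞, to the three-point law p·δ_{p−q} + r·δ_0 + q·δ_{−(p−q)} (i.e. the limit takes the value p − q with probability p, the value 0 with probability r, and the value −(p−q) with probability q). Moreover E(S_n/n) → (p−q)² and Var(S_n/n) → (p−q)²·(p + q − (p−q)²) as n → ∞. -/

import Mathlib

open MeasureTheory ProbabilityTheory Filter Real
open scoped ENNReal NNReal Topology Classical

noncomputable section

/-- The σ-algebra `σ(X_1, …, X_n)` generated by the first `n` steps. -/
def sigmaUpTo {Ω : Type*} (X : ℕ → Ω → ℝ) (n : ℕ) : MeasurableSpace Ω :=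
  MeasurableSpace.comap (fun ω (k : Fin n) => X ((k : ℕ) + 1) ω) inferInstance

/-- Weak convergence of a sequence of measures on `ℝ` (convergence in distribution):
integrals of every bounded continuous function converge. -/
def TendstoInDist (μs : ℕ → Measure ℝ) (ν : Measure ℝ) : Prop :=
  ∀ f : BoundedContinuousFunction ℝ ℝ,
    Tendsto (fun n => ∫ x, f x ∂(μs n)) atTop (𝓝 (∫ x, f x ∂ν))

/-!
Write `M = (p - q) X₁`. The hypotheses say that `E[X_{n+1} | X₁, …, X_n] = M` for `n ≥ 1`, so the
bounded centred steps `X_k - M` are orthogonal in `L²` and `E[(S_n/n - M)²] = O(1/n)`. Hence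
`S_n/n → M` in probability, and by bounded convergence `E[g(S_n/n)] → E[g(M)]` for every continuous
`g` that is bounded on `[-1, 1]`. Since `M` equals `p - q`, `0`, `-(p - q)` with probabilities
`p`, `r`, `q`, taking `g` bounded continuous, `g x = x` and `g x = x²` gives the three claims.
-/

section Orthogonality

variable {Ω ι : Type*} {m m0 : MeasurableSpace Ω} {μ : Measure Ω}

lemma integral_mul_sub_eq_zero_of_condExp_ae_eq [IsFiniteMeasure μ] (hm : m ≤ m0)
    {f h g : Ω → ℝ} {C : ℝ} (hf : Integrable f μ) (hh : StronglyMeasurable[m] h)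
    (hhi : Integrable h μ) (hfh : μ[f | m] =ᵐ[μ] h) (hg : StronglyMeasurable[m] g)
    (hgC : ∀ ω, |g ω| ≤ C) :
    ∫ ω, g ω * (f ω - h ω) ∂μ = 0 := by
  have hcond : μ[f - h | m] =ᵐ[μ] 0 := by
    filter_upwards [condExp_sub hf hhi m, hfh] with ω h₁ h₂
    rw [h₁, Pi.sub_apply, h₂, condExp_of_stronglyMeasurable hm hh hhi, sub_self, Pi.zero_apply]
  have hpull : μ[g * (f - h) | m] =ᵐ[μ] g * μ[f - h | m] :=
    condExp_stronglyMeasurable_mul_of_bound hm hg (hf.sub hhi) C (ae_of_all _ hgC)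
  calc ∫ ω, g ω * (f ω - h ω) ∂μ = ∫ ω, μ[g * (f - h) | m] ω ∂μ := (integral_condExp hm).symm
    _ = 0 := by
      rw [← integral_zero Ω ℝ]
      refine integral_congr_ae ?_
      filter_upwards [hpull, hcond] with ω h₁ h₂
      simp [h₁, h₂]

lemma integral_sq_sum_eq_sum_integral_sq {s : Finset ι} {Z : ι → Ω → ℝ}
    (hint : ∀ j ∈ s, ∀ k ∈ s, Integrable (fun ω => Z j ω * Z k ω) μ)
    (horth : ∀ j ∈ s, ∀ k ∈ s, j ≠ k → ∫ ω, Z j ω * Z k ω ∂μ = 0) :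
    ∫ ω, (∑ k ∈ s, Z k ω) ^ 2 ∂μ = ∑ k ∈ s, ∫ ω, Z k ω ^ 2 ∂μ := by
  simp_rw [sq, Finset.sum_mul_sum]
  rw [integral_finsetSum _ fun j hj => integrable_finsetSum _ fun k hk => hint j hj k hk]
  refine Finset.sum_congr rfl fun j hj => ?_
  rw [integral_finsetSum _ fun k hk => hint j hj k hk]
  exact Finset.sum_eq_single_of_mem j hj fun k hk hkj => horth j hj k hk hkj.symm

lemma integral_sq_sum_le_of_orthogonal [IsProbabilityMeasure μ] {s : Finset ι}
    {Z : ι → Ω → ℝ} {C : ℝ} (hmeas : ∀ k ∈ s, AEStronglyMeasurable (Z k) μ)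
    (hbd : ∀ k ∈ s, ∀ ω, |Z k ω| ≤ C)
    (horth : ∀ j ∈ s, ∀ k ∈ s, j ≠ k → ∫ ω, Z j ω * Z k ω ∂μ = 0) :
    ∫ ω, (∑ k ∈ s, Z k ω) ^ 2 ∂μ ≤ s.card * C ^ 2 := by
  have hsq : ∀ k ∈ s, ∀ ω, Z k ω ^ 2 ≤ C ^ 2 := fun k hk ω =>
    sq_abs (Z k ω) ▸ pow_le_pow_left₀ (abs_nonneg _) (hbd k hk ω) 2
  have hint : ∀ j ∈ s, ∀ k ∈ s, Integrable (fun ω => Z j ω * Z k ω) μ := fun j hj k hk =>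
    Integrable.of_bound ((hmeas j hj).mul (hmeas k hk)) (C * C) <| ae_of_all _ fun ω => by
      rw [Real.norm_eq_abs, abs_mul]
      exact mul_le_mul (hbd j hj ω) (hbd k hk ω) (abs_nonneg _) ((abs_nonneg _).trans (hbd j hj ω))
  rw [integral_sq_sum_eq_sum_integral_sq hint horth, ← nsmul_eq_mul]
  refine Finset.sum_le_card_nsmul _ _ _ fun k hk => ?_
  calc ∫ ω, Z k ω ^ 2 ∂μ ≤ ∫ _, C ^ 2 ∂μ :=
        integral_mono (by simpa only [sq] using hint k hk k hk) (integrable_const _) (hsq k hk)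
    _ = C ^ 2 := by simp

end Orthogonality

section ConvergenceInMeasure

variable {Ω ι : Type*} [MeasurableSpace Ω] {μ : Measure Ω}

lemma tendstoInMeasure_of_tendsto_integral_sq_sub [IsFiniteMeasure μ] {l : Filter ι}
    {Y : ι → Ω → ℝ} {Y' : Ω → ℝ} (hint : ∀ i, Integrable (fun ω => (Y i ω - Y' ω) ^ 2) μ)
    (h : Tendsto (fun i => ∫ ω, (Y i ω - Y' ω) ^ 2 ∂μ) l (𝓝 0)) :
    TendstoInMeasure μ Y l Y' := by
  rw [tendstoInMeasure_iff_measureReal_dist]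
  intro ε hε
  have hmarkov : ∀ i, μ.real {ω | ε ≤ dist (Y i ω) (Y' ω)} ≤
      (∫ ω, (Y i ω - Y' ω) ^ 2 ∂μ) / ε ^ 2 := fun i => by
    have hset : {ω | ε ≤ dist (Y i ω) (Y' ω)} = {ω | ε ^ 2 ≤ (Y i ω - Y' ω) ^ 2} := by
      ext ω
      rw [Set.mem_ofPred_eq, Set.mem_ofPred_eq, Real.dist_eq, ← sq_abs (Y i ω - Y' ω),
        sq_le_sq₀ hε.le (abs_nonneg _)]
    rw [hset, le_div_iff₀ (by positivity), mul_comm]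
    exact mul_meas_ge_le_integral_of_nonneg (ae_of_all _ fun ω => sq_nonneg _) (hint i) _
  refine squeeze_zero (fun i => measureReal_nonneg) hmarkov ?_
  simpa using h.div_const (ε ^ 2)

lemma tendsto_integral_comp_of_tendstoInMeasure [IsFiniteMeasure μ] {Y : ℕ → Ω → ℝ}
    {Y' : Ω → ℝ} {g : ℝ → ℝ} {C : ℝ} (hY : TendstoInMeasure μ Y atTop Y')
    (hmeas : ∀ n, AEStronglyMeasurable (Y n) μ) (hg : Continuous g)
    (hbd : ∀ n ω, |g (Y n ω)| ≤ C) :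
    Tendsto (fun n => ∫ ω, g (Y n ω) ∂μ) atTop (𝓝 (∫ ω, g (Y' ω) ∂μ)) := by
  refine tendsto_of_subseq_tendsto fun ns hns => ?_
  obtain ⟨ms, -, hms⟩ := (hY.comp hns).exists_seq_tendsto_ae
  exact ⟨ms, tendsto_integral_of_dominated_convergence (fun _ => C)
    (fun n => hg.comp_aestronglyMeasurable (hmeas _)) (integrable_const C)
    (fun n => ae_of_all _ fun ω => (Real.norm_eq_abs _).trans_le (hbd _ ω))
    (hms.mono fun ω hω => (hg.tendsto _).comp hω)⟩

end ConvergenceInMeasure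

section ThreePointLaw

variable {Ω : Type*} [MeasurableSpace Ω] {μ : Measure Ω} {a b c : ℝ}

lemma integral_smul_dirac_add (ha : 0 ≤ a) (hb : 0 ≤ b) (hc : 0 ≤ c) (x y z : ℝ) (f : ℝ → ℝ) :
    ∫ t, f t ∂(ENNReal.ofReal a • Measure.dirac x + ENNReal.ofReal b • Measure.dirac y
      + ENNReal.ofReal c • Measure.dirac z) = a * f x + b * f y + c * f z := by
  have hf : ∀ w d : ℝ, Integrable f (ENNReal.ofReal d • Measure.dirac w) := fun w d =>
    (integrable_dirac enorm_lt_top).smul_measure ENNReal.ofReal_ne_top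
  rw [integral_add_measure ((hf x _).add_measure (hf y _)) (hf z _),
    integral_add_measure (hf x _) (hf y _), integral_smul_measure, integral_smul_measure,
    integral_smul_measure, integral_dirac, integral_dirac, integral_dirac,
    ENNReal.toReal_ofReal ha, ENNReal.toReal_ofReal hb, ENNReal.toReal_ofReal hc]
  simp only [smul_eq_mul]

lemma integral_comp_eq_of_three_valued [IsFiniteMeasure μ] {V : Ω → ℝ} (hV : Measurable V)
    (hval : ∀ ω, V ω = 1 ∨ V ω = -1 ∨ V ω = 0) (ha : 0 ≤ a) (hb : 0 ≤ b) (hc : 0 ≤ c)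
    (h₁ : μ {ω | V ω = 1} = ENNReal.ofReal a) (h₂ : μ {ω | V ω = -1} = ENNReal.ofReal b)
    (h₀ : μ {ω | V ω = 0} = ENNReal.ofReal c) (f : ℝ → ℝ) :
    ∫ ω, f (V ω) ∂μ = a * f 1 + b * f (-1) + c * f 0 := by
  have hmeas : ∀ x : ℝ, MeasurableSet {ω | V ω = x} := fun x => hV (measurableSet_singleton x)
  have hint : ∀ x y : ℝ, Integrable ({ω | V ω = x}.indicator fun _ => y) μ := fun x y =>
    (integrable_const y).indicator (hmeas x)
  have hsplit : (fun ω => f (V ω)) = fun ω => {ω | V ω = 1}.indicator (fun _ => f 1) ω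
      + {ω | V ω = -1}.indicator (fun _ => f (-1)) ω
      + {ω | V ω = 0}.indicator (fun _ => f 0) ω := by
    funext ω
    rcases hval ω with h | h | h <;> simp [Set.indicator_apply, h] <;> norm_num
  have hreal : ∀ x {d : ℝ}, 0 ≤ d → μ {ω | V ω = x} = ENNReal.ofReal d →
      ∫ ω, {ω | V ω = x}.indicator (fun _ => f x) ω ∂μ = d * f x := fun x d hd h => by
    rw [integral_indicator_const _ (hmeas x), measureReal_def, h, ENNReal.toReal_ofReal hd,
      smul_eq_mul]
  rw [hsplit, integral_add ((hint _ _).fun_add (hint _ _)) (hint _ _),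
    integral_add (hint _ _) (hint _ _), hreal 1 ha h₁, hreal (-1) hb h₂, hreal 0 hc h₀]

end ThreePointLaw

section FirstStepMemory

variable {Ω : Type*} {p q : ℝ} {X : ℕ → Ω → ℝ}

variable (X) in
lemma measurable_sigmaUpTo {k n : ℕ} (hk : 1 ≤ k) (hkn : k ≤ n) :
    Measurable[sigmaUpTo X n] (X k) := by
  have h : X k = (fun v : Fin n → ℝ => v ⟨k - 1, by omega⟩) ∘
      (fun ω (j : Fin n) => X ((j : ℕ) + 1) ω) := by
    funext ω
    simp only [Function.comp_apply]
    congr 1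
    omega
  rw [h]
  exact (measurable_pi_apply _).comp (Measurable.of_comap_le le_rfl)

lemma abs_sub_first_step_le (hXbd : ∀ k, 1 ≤ k → ∀ ω, |X k ω| ≤ 1) {k : ℕ} (hk : 1 ≤ k)
    (ω : Ω) : |X k ω - (p - q) * X 1 ω| ≤ 1 + |p - q| :=
  calc |X k ω - (p - q) * X 1 ω| ≤ |X k ω| + |p - q| * |X 1 ω| := by
        rw [← abs_mul]; exact abs_sub _ _
    _ ≤ 1 + |p - q| * 1 := by gcongr <;> exact hXbd _ (by omega) ω
    _ = 1 + |p - q| := by rw [mul_one]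

lemma abs_avg_le_one (hXbd : ∀ k, 1 ≤ k → ∀ ω, |X k ω| ≤ 1) (n : ℕ) (ω : Ω) :
    |(∑ k ∈ Finset.Icc 1 n, X k ω) / n| ≤ 1 := by
  rcases Nat.eq_zero_or_pos n with rfl | hn
  · simp
  rw [abs_div, Nat.abs_cast, div_le_one (by exact_mod_cast hn)]
  calc |∑ k ∈ Finset.Icc 1 n, X k ω| ≤ ∑ k ∈ Finset.Icc 1 n, |X k ω| :=
        Finset.abs_sum_le_sum_abs _ _
    _ ≤ ∑ _k ∈ Finset.Icc 1 n, (1 : ℝ) :=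
        Finset.sum_le_sum fun k hk => hXbd k (Finset.mem_Icc.mp hk).1 ω
    _ = n := by simp

variable [MeasurableSpace Ω] {P : Measure Ω}

lemma sigmaUpTo_le (hXmeas : ∀ n, Measurable (X n)) (n : ℕ) :
    sigmaUpTo X n ≤ ‹MeasurableSpace Ω› := by
  rw [sigmaUpTo, ← measurable_iff_comap_le]
  exact measurable_pi_lambda _ fun k => hXmeas _

lemma condExp_succ_ae_eq [IsFiniteMeasure P] {n : ℕ} (hmeas : Measurable (X (n + 1)))
    (hval : ∀ ω, X (n + 1) ω = 1 ∨ X (n + 1) ω = -1 ∨ X (n + 1) ω = 0)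
    (hval₁ : ∀ ω, X 1 ω = 1 ∨ X 1 ω = -1 ∨ X 1 ω = 0)
    (hcondp : P[Set.indicator {ω | X (n + 1) ω = 1} (fun _ => (1 : ℝ)) | sigmaUpTo X n]
        =ᵐ[P] fun ω =>
          p * (if X 1 ω = 1 then (1 : ℝ) else 0) + q * (if X 1 ω = -1 then (1 : ℝ) else 0))
    (hcondq : P[Set.indicator {ω | X (n + 1) ω = -1} (fun _ => (1 : ℝ)) | sigmaUpTo X n]
        =ᵐ[P] fun ω =>
          q * (if X 1 ω = 1 then (1 : ℝ) else 0) + p * (if X 1 ω = -1 then (1 : ℝ) else 0)) :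
    P[X (n + 1) | sigmaUpTo X n] =ᵐ[P] fun ω => (p - q) * X 1 ω := by
  have hint : ∀ x : ℝ, Integrable ({ω | X (n + 1) ω = x}.indicator fun _ => (1 : ℝ)) P :=
    fun x => (integrable_const 1).indicator (hmeas (measurableSet_singleton x))
  have hsplit : X (n + 1) = {ω | X (n + 1) ω = 1}.indicator (fun _ => 1)
      - {ω | X (n + 1) ω = -1}.indicator (fun _ => 1) := by
    funext ω
    rcases hval ω with h | h | h <;> simp [Set.indicator_apply, h] <;> norm_num
  rw [hsplit]
  filter_upwards [condExp_sub (hint 1) (hint (-1)) _, hcondp, hcondq] with ω h h₁ h₂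
  rw [h, Pi.sub_apply, h₁, h₂]
  rcases hval₁ ω with h | h | h <;> simp [h] <;> norm_num

variable [IsProbabilityMeasure P] (hXmeas : ∀ n, Measurable (X n))
  (hXbd : ∀ k, 1 ≤ k → ∀ ω, |X k ω| ≤ 1)
  (hstep : ∀ n, 1 ≤ n → P[X (n + 1) | sigmaUpTo X n] =ᵐ[P] fun ω => (p - q) * X 1 ω)
include hXmeas hXbd hstep

lemma integral_sub_first_step_mul_eq_zero {j k : ℕ} (hj : 1 ≤ j) (hjk : j < k) :
    ∫ ω, (X j ω - (p - q) * X 1 ω) * (X k ω - (p - q) * X 1 ω) ∂P = 0 := by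
  obtain ⟨n, rfl⟩ : ∃ n, k = n + 1 := ⟨k - 1, by omega⟩
  have hm := measurable_sigmaUpTo X le_rfl (show 1 ≤ n by omega)
  have hint : ∀ k, 1 ≤ k → Integrable (X k) P := fun k hk =>
    Integrable.of_bound (hXmeas k).aestronglyMeasurable 1 (ae_of_all _ (hXbd k hk))
  exact integral_mul_sub_eq_zero_of_condExp_ae_eq (sigmaUpTo_le hXmeas n)
    (hint (n + 1) (by omega)) (hm.const_mul _).stronglyMeasurable
    ((hint 1 le_rfl).const_mul _) (hstep n (by omega))
    ((measurable_sigmaUpTo X hj (by omega)).sub (hm.const_mul _)).stronglyMeasurable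
    (abs_sub_first_step_le hXbd hj)

lemma integral_sq_sum_sub_first_step_le (n : ℕ) :
    ∫ ω, (∑ k ∈ Finset.Icc 1 n, (X k ω - (p - q) * X 1 ω)) ^ 2 ∂P ≤ n * (1 + |p - q|) ^ 2 := by
  have horth : ∀ j ∈ Finset.Icc 1 n, ∀ k ∈ Finset.Icc 1 n, j ≠ k →
      ∫ ω, (X j ω - (p - q) * X 1 ω) * (X k ω - (p - q) * X 1 ω) ∂P = 0 := by
    intro j hj k hk hjk
    rw [Finset.mem_Icc] at hj hk
    rcases hjk.lt_or_gt with h | h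
    · exact integral_sub_first_step_mul_eq_zero hXmeas hXbd hstep hj.1 h
    · simp_rw [mul_comm (X j _ - _)]
      exact integral_sub_first_step_mul_eq_zero hXmeas hXbd hstep hk.1 h
  simpa using integral_sq_sum_le_of_orthogonal
    (fun k _ => ((hXmeas k).sub ((hXmeas 1).const_mul _)).aestronglyMeasurable)
    (fun k hk => abs_sub_first_step_le hXbd (Finset.mem_Icc.mp hk).1) horth

lemma tendstoInMeasure_avg :
    TendstoInMeasure P (fun n ω => (∑ k ∈ Finset.Icc 1 n, X k ω) / n) atTop
      (fun ω => (p - q) * X 1 ω) := by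
  set C := 1 + |p - q|
  have havg : ∀ n : ℕ, 1 ≤ n → ∀ ω, (∑ k ∈ Finset.Icc 1 n, X k ω) / n - (p - q) * X 1 ω
      = (∑ k ∈ Finset.Icc 1 n, (X k ω - (p - q) * X 1 ω)) / n := fun n hn ω => by
    have : (n : ℝ) ≠ 0 := by positivity
    rw [Finset.sum_sub_distrib, Finset.sum_const, Nat.card_Icc, Nat.add_sub_cancel,
      nsmul_eq_mul]
    field_simp
  have hbd : ∀ n : ℕ, ∀ ω, |(∑ k ∈ Finset.Icc 1 n, X k ω) / n - (p - q) * X 1 ω| ≤ C :=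
    fun n ω => calc
      _ ≤ |(∑ k ∈ Finset.Icc 1 n, X k ω) / n| + |p - q| * |X 1 ω| := by
        rw [← abs_mul]; exact abs_sub _ _
      _ ≤ 1 + |p - q| * 1 := by
        gcongr
        exacts [abs_avg_le_one hXbd n ω, hXbd 1 le_rfl ω]
      _ = C := by rw [mul_one]
  refine tendstoInMeasure_of_tendsto_integral_sq_sub (fun n => ?_) ?_
  · refine Integrable.of_bound (by fun_prop) (C ^ 2) (ae_of_all _ fun ω => ?_)
    rw [Real.norm_eq_abs, abs_pow]
    exact pow_le_pow_left₀ (abs_nonneg _) (hbd n ω) 2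
  refine squeeze_zero' (Eventually.of_forall fun n => integral_nonneg fun ω => sq_nonneg _) ?_
    (tendsto_const_div_atTop_nhds_zero_nat (C ^ 2))
  filter_upwards [eventually_ge_atTop 1] with n hn
  have hn' : (0 : ℝ) < n := by exact_mod_cast hn
  simp_rw [havg n hn, div_pow, integral_div]
  rw [div_le_div_iff₀ (by positivity) hn', sq (n : ℝ), ← mul_assoc]
  exact mul_le_mul_of_nonneg_right
    (by simpa [mul_comm] using integral_sq_sum_sub_first_step_le hXmeas hXbd hstep n) hn'.le

lemma tendsto_integral_comp_avg {r : ℝ} (hval₁ : ∀ ω, X 1 ω = 1 ∨ X 1 ω = -1 ∨ X 1 ω = 0)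
    (hp : 0 ≤ p) (hq : 0 ≤ q) (hr : 0 ≤ r) (h₁ : P {ω | X 1 ω = 1} = ENNReal.ofReal p)
    (h₂ : P {ω | X 1 ω = -1} = ENNReal.ofReal q) (h₀ : P {ω | X 1 ω = 0} = ENNReal.ofReal r)
    {g : ℝ → ℝ} (hg : Continuous g) {C : ℝ}
    (hC : ∀ n ω, |g ((∑ k ∈ Finset.Icc 1 n, X k ω) / n)| ≤ C) :
    Tendsto (fun n : ℕ => ∫ ω, g ((∑ k ∈ Finset.Icc 1 n, X k ω) / n) ∂P) atTop
      (𝓝 (p * g (p - q) + r * g 0 + q * g (-(p - q)))) := by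
  have h := tendsto_integral_comp_of_tendstoInMeasure (tendstoInMeasure_avg hXmeas hXbd hstep)
    (fun n => by fun_prop) hg hC
  rw [integral_comp_eq_of_three_valued (hXmeas 1) hval₁ hp hq hr h₁ h₂ h₀
    fun x => g ((p - q) * x)] at h
  convert h using 2
  simp only [mul_one, mul_neg, mul_zero]
  ring

end FirstStepMemory

theorem erwd_first_step_memory_weak_limit_general
    {Ω : Type*} [MeasurableSpace Ω] (P : Measure Ω) [IsProbabilityMeasure P]
    (p q r : ℝ) (hp : 0 < p) (hq : 0 < q)
    (hr : 0 < r)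
    (X : ℕ → Ω → ℝ) (hXmeas : ∀ n, Measurable (X n))
    (hXval : ∀ n, 1 ≤ n → ∀ ω, X n ω = 1 ∨ X n ω = -1 ∨ X n ω = 0)
    (hX1p : P {ω | X 1 ω = 1} = ENNReal.ofReal p)
    (hX1q : P {ω | X 1 ω = -1} = ENNReal.ofReal q)
    (hX1r : P {ω | X 1 ω = 0} = ENNReal.ofReal r)
    (hcondp : ∀ n : ℕ, 1 ≤ n →
      P[Set.indicator {ω | X (n + 1) ω = 1} (fun _ => (1 : ℝ)) | sigmaUpTo X n]
        =ᵐ[P] fun ω =>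
          p * (if X 1 ω = 1 then (1 : ℝ) else 0) + q * (if X 1 ω = -1 then (1 : ℝ) else 0))
    (hcondq : ∀ n : ℕ, 1 ≤ n →
      P[Set.indicator {ω | X (n + 1) ω = -1} (fun _ => (1 : ℝ)) | sigmaUpTo X n]
        =ᵐ[P] fun ω =>
          q * (if X 1 ω = 1 then (1 : ℝ) else 0) + p * (if X 1 ω = -1 then (1 : ℝ) else 0))
    (S : ℕ → Ω → ℝ) (hS : ∀ n ω, S n ω = ∑ k ∈ Finset.Icc 1 n, X k ω)
    :
    TendstoInDist (fun n : ℕ => Measure.map (fun ω => S n ω / n) P)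
      (ENNReal.ofReal p • Measure.dirac (p - q)
        + ENNReal.ofReal r • Measure.dirac 0
        + ENNReal.ofReal q • Measure.dirac (-(p - q))) ∧
    Tendsto (fun n : ℕ => ∫ ω, S n ω / n ∂P) atTop (𝓝 ((p - q) ^ 2)) ∧
    Tendsto (fun n : ℕ => variance (fun ω => S n ω / n) P) atTop
      (𝓝 ((p - q) ^ 2 * (p + q - (p - q) ^ 2))) := by
  obtain rfl : S = fun n ω => ∑ k ∈ Finset.Icc 1 n, X k ω := funext₂ hS
  have hXbd : ∀ k, 1 ≤ k → ∀ ω, |X k ω| ≤ 1 := fun k hk ω => by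
    rcases hXval k hk ω with h | h | h <;> simp [h]
  have hstep n (hn : 1 ≤ n) := condExp_succ_ae_eq (hXmeas (n + 1)) (hXval (n + 1) (by omega))
    (hXval 1 le_rfl) (hcondp n hn) (hcondq n hn)
  have hmeas : ∀ n : ℕ, Measurable fun ω => (∑ k ∈ Finset.Icc 1 n, X k ω) / n := by fun_prop
  have hlim {g : ℝ → ℝ} (hg : Continuous g) {C : ℝ} :=
    tendsto_integral_comp_avg hXmeas hXbd hstep (hXval 1 le_rfl) hp.le hq.le hr.le hX1p hX1q
      hX1r hg (C := C)
  have hmean : Tendsto (fun n : ℕ => ∫ ω, (∑ k ∈ Finset.Icc 1 n, X k ω) / n ∂P) atTop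
      (𝓝 ((p - q) ^ 2)) := by
    convert hlim continuous_id' (C := 1) (abs_avg_le_one hXbd) using 2
    ring
  have hsq : Tendsto (fun n : ℕ => ∫ ω, ((∑ k ∈ Finset.Icc 1 n, X k ω) / n) ^ 2 ∂P) atTop
      (𝓝 ((p - q) ^ 2 * (p + q))) := by
    convert hlim (continuous_pow 2) (C := 1) (fun n ω => by
      simpa [abs_pow] using abs_avg_le_one hXbd n ω) using 2
    ring
  refine ⟨fun f => ?_, hmean, ?_⟩
  · simp_rw [integral_smul_dirac_add hp.le hr.le hq.le,
      integral_map (hmeas _).aemeasurable f.continuous.aestronglyMeasurable]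
    exact hlim f.continuous (C := ‖f‖) fun n ω =>
      (Real.norm_eq_abs _).symm.trans_le (f.norm_coe_le_norm _)
  · have hL2 : ∀ n : ℕ, MemLp (fun ω => (∑ k ∈ Finset.Icc 1 n, X k ω) / n) 2 P := fun n =>
      MemLp.of_bound (hmeas n).aestronglyMeasurable 1 (ae_of_all _ (abs_avg_le_one hXbd n))
    rw [show (p - q) ^ 2 * (p + q - (p - q) ^ 2) = (p - q) ^ 2 * (p + q) - ((p - q) ^ 2) ^ 2 by
      ring]
    exact (hsq.sub (hmean.pow 2)).congr fun n => (variance_eq_sub (hL2 n)).symm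

/-- for the ERWD remembering only the first step, `Sₙ/n` converges in
distribution to `p·δ_{p−q} + r·δ₀ + q·δ_{−(p−q)}`, and the mean and variance of `Sₙ/n`
converge to `(p−q)²` and `(p−q)²(p+q−(p−q)²)` respectively. -/
theorem erwd_first_step_memory_weak_limit
    {Ω : Type*} [MeasurableSpace Ω] (P : Measure Ω) [IsProbabilityMeasure P]
    (p q r : ℝ) (hp : 0 < p) (hp1 : p < 1) (hq : 0 < q) (hq1 : q < 1)
    (hr : 0 < r) (hr1 : r < 1) (hpqr : p + q + r = 1)
    (X : ℕ → Ω → ℝ) (hXmeas : ∀ n, Measurable (X n))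
    (hXval : ∀ n, 1 ≤ n → ∀ ω, X n ω = 1 ∨ X n ω = -1 ∨ X n ω = 0)
    (hX1p : P {ω | X 1 ω = 1} = ENNReal.ofReal p)
    (hX1q : P {ω | X 1 ω = -1} = ENNReal.ofReal q)
    (hX1r : P {ω | X 1 ω = 0} = ENNReal.ofReal r)
    (hcondp : ∀ n : ℕ, 1 ≤ n →
      P[Set.indicator {ω | X (n + 1) ω = 1} (fun _ => (1 : ℝ)) | sigmaUpTo X n]
        =ᵐ[P] fun ω =>
          p * (if X 1 ω = 1 then (1 : ℝ) else 0) + q * (if X 1 ω = -1 then (1 : ℝ) else 0))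
    (hcondq : ∀ n : ℕ, 1 ≤ n →
      P[Set.indicator {ω | X (n + 1) ω = -1} (fun _ => (1 : ℝ)) | sigmaUpTo X n]
        =ᵐ[P] fun ω =>
          q * (if X 1 ω = 1 then (1 : ℝ) else 0) + p * (if X 1 ω = -1 then (1 : ℝ) else 0))
    (S : ℕ → Ω → ℝ) (hS : ∀ n ω, S n ω = ∑ k ∈ Finset.Icc 1 n, X k ω)
    :
    TendstoInDist (fun n : ℕ => Measure.map (fun ω => S n ω / n) P)
      (ENNReal.ofReal p • Measure.dirac (p - q)
        + ENNReal.ofReal r • Measure.dirac 0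
        + ENNReal.ofReal q • Measure.dirac (-(p - q))) ∧
    Tendsto (fun n : ℕ => ∫ ω, S n ω / n ∂P) atTop (𝓝 ((p - q) ^ 2)) ∧
    Tendsto (fun n : ℕ => variance (fun ω => S n ω / n) P) atTop
      (𝓝 ((p - q) ^ 2 * (p + q - (p - q) ^ 2))) :=
  erwd_first_step_memory_weak_limit_general P p q r hp hq hr X hXmeas hXval hX1p hX1q hX1r hcondp
    hcondq S hS
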